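/- Define F : ℝ × ℝ → ℂ by F(x,t) = e^x·(tanh t + i·sech t). Then for every continuously differentiable path η = (η₁, η₂) : [0,1] → ℝ², the hyperbolic length of F∘η, namely ∫₀¹ |(F∘η)′(s)| / Im((F∘η)(s)) ds, equals ∫₀¹ √(cosh²(η₂(s))·η₁′(s)² + η₂′(s)²) ds. Consequently this hyperbolic length lies between (1/√2)·L(η) and L(η), where L(η) = ∫₀¹ √(cosh(2·η₂(s))·η₁′(s)² + η₂′(s)²) ds is the ladder length of η. -/

import Mathlib

open Real Set

/-!
Write `F(x,t) = eˣ·g(t)` with `g(t) = (sinh t + i)/cosh t`. Then `g' = -(i/cosh t)·g`, so the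
velocity of `F ∘ η` is `F·(η₁′ - i·η₂′/cosh η₂)`. As `|g| = 1` and `Im F = eˣ/cosh t`, the
hyperbolic speed is `cosh η₂·|η₁′ - i·η₂′/cosh η₂| = √(cosh² η₂·η₁′² + η₂′²)`. The comparison
with the ladder length is pointwise: `cosh 2t = 2cosh² t - 1` lies between `cosh² t` and
`2cosh² t`.
-/

/-- The strip parametrization `F(x,t) = eˣ·(tanh t + i·sech t)` of the paper's ladders. -/
noncomputable def stripMap (x t : ℝ) : ℂ :=
  (Real.exp x : ℂ) * ((Real.tanh t : ℂ) + ((Real.cosh t)⁻¹ : ℝ) * Complex.I)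

open Complex in
lemma stripMap_eq_mul_div (x t : ℝ) :
    stripMap x t = (Real.exp x : ℂ) * ((Real.sinh t + I) / Real.cosh t) := by
  have : (Real.cosh t : ℂ) ≠ 0 := ofReal_ne_zero.2 (cosh_pos t).ne'
  rw [stripMap, Real.tanh_eq_sinh_div_cosh, ofReal_div, ofReal_inv]
  field_simp

open Complex in
theorem HasDerivWithinAt.stripMap {x t : ℝ → ℝ} {x' t' u : ℝ} {s : Set ℝ}
    (hx : HasDerivWithinAt x x' s u) (ht : HasDerivWithinAt t t' s u) :
    HasDerivWithinAt (fun v => stripMap (x v) (t v))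
      (stripMap (x u) (t u) * (x' - t' / Real.cosh (t u) * I)) s u := by
  have hc : (Real.cosh (t u) : ℂ) ≠ 0 := ofReal_ne_zero.2 (cosh_pos _).ne'
  simp only [stripMap_eq_mul_div]
  refine (hx.exp.ofReal_comp.mul
    ((ht.sinh.ofReal_comp.add_const I).div ht.cosh.ofReal_comp hc)).congr_deriv ?_
  have hpy : (Real.cosh (t u) : ℂ) ^ 2 - (Real.sinh (t u) : ℂ) ^ 2 = 1 := by
    exact_mod_cast Real.cosh_sq_sub_sinh_sq (t u)
  simp only [ofReal_mul, Pi.div_apply]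
  field_simp
  linear_combination (t' : ℂ) * hpy + (t' : ℂ) * I_sq

lemma stripMap_im (x t : ℝ) : (stripMap x t).im = Real.exp x / Real.cosh t := by
  simp only [stripMap, Complex.mul_im, Complex.add_re, Complex.add_im, Complex.mul_re,
    Complex.ofReal_re, Complex.ofReal_im, Complex.I_re, Complex.I_im]
  ring

lemma norm_stripMap (x t : ℝ) : ‖stripMap x t‖ = Real.exp x := by
  have h := Complex.norm_add_mul_I (sinh t) 1
  rw [Complex.ofReal_one, one_mul, one_pow, ← cosh_sq, sqrt_sq (cosh_pos t).le] at h
  rw [stripMap_eq_mul_div, norm_mul, norm_div, h, Complex.norm_real, Complex.norm_real,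
    Real.norm_of_nonneg (exp_pos x).le, Real.norm_of_nonneg (cosh_pos t).le,
    div_self (cosh_pos t).ne', mul_one]

lemma norm_stripMap_mul_div_im (x t a b : ℝ) :
    ‖stripMap x t * (a - b / Real.cosh t * Complex.I)‖ / (stripMap x t).im =
      √(cosh t ^ 2 * a ^ 2 + b ^ 2) := by
  have hc := cosh_pos t
  have hab : (a : ℂ) - b / Real.cosh t * Complex.I =
      a + ((-(b / cosh t) : ℝ) : ℂ) * Complex.I := by
    push_cast
    ring
  have hsq : cosh t ^ 2 * a ^ 2 + b ^ 2 = cosh t ^ 2 * (a ^ 2 + (-(b / cosh t)) ^ 2) := by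
    field_simp
  rw [norm_mul, norm_stripMap, stripMap_im, hab, Complex.norm_add_mul_I, hsq,
    sqrt_mul (sq_nonneg _), sqrt_sq hc.le]
  field_simp

lemma norm_derivWithin_stripMap_div_im {x t : ℝ → ℝ} {s : Set ℝ} {u : ℝ}
    (hx : DifferentiableWithinAt ℝ x s u) (ht : DifferentiableWithinAt ℝ t s u)
    (hs : UniqueDiffWithinAt ℝ s u) :
    ‖derivWithin (fun v => stripMap (x v) (t v)) s u‖ / (stripMap (x u) (t u)).im =
      √(cosh (t u) ^ 2 * derivWithin x s u ^ 2 + derivWithin t s u ^ 2) := by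
  rw [(hx.hasDerivWithinAt.stripMap ht.hasDerivWithinAt).derivWithin hs,
    norm_stripMap_mul_div_im]

lemma integral_norm_derivWithin_stripMap_div_im {x t : ℝ → ℝ} {a b : ℝ} (hab : a < b)
    (hx : DifferentiableOn ℝ x (Icc a b)) (ht : DifferentiableOn ℝ t (Icc a b)) :
    ∫ s in a..b, ‖derivWithin (fun v => stripMap (x v) (t v)) (Icc a b) s‖ /
        (stripMap (x s) (t s)).im =
      ∫ s in a..b, √(cosh (t s) ^ 2 * derivWithin x (Icc a b) s ^ 2 +
        derivWithin t (Icc a b) s ^ 2) :=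
  intervalIntegral.integral_congr fun s hs => by
    rw [uIcc_of_le hab.le] at hs
    exact norm_derivWithin_stripMap_div_im (hx s hs) (ht s hs) (uniqueDiffOn_Icc hab s hs)

lemma sqrt_cosh_sq_le_sqrt_cosh_two_mul (t a b : ℝ) :
    √(cosh t ^ 2 * a ^ 2 + b ^ 2) ≤ √(cosh (2 * t) * a ^ 2 + b ^ 2) := by
  have : cosh t ^ 2 ≤ cosh (2 * t) := by
    rw [cosh_two_mul]
    exact le_add_of_nonneg_right (sq_nonneg _)
  gcongr

lemma inv_sqrt_two_mul_sqrt_cosh_two_mul_le (t a b : ℝ) :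
    1 / √2 * √(cosh (2 * t) * a ^ 2 + b ^ 2) ≤ √(cosh t ^ 2 * a ^ 2 + b ^ 2) := by
  have : cosh (2 * t) ≤ 2 * cosh t ^ 2 := by
    rw [cosh_two_mul, two_mul, sinh_sq]
    linarith
  rw [one_div, ← sqrt_inv, ← sqrt_mul (by norm_num)]
  gcongr
  nlinarith [sq_nonneg a, sq_nonneg b]

lemma intervalIntegrable_sqrt_mul_sq_derivWithin_add_sq {w : ℝ → ℝ} (hw : Continuous w)
    {x t : ℝ → ℝ} {a b : ℝ} (hab : a < b)
    (hx : ContDiffOn ℝ 1 x (Icc a b)) (ht : ContDiffOn ℝ 1 t (Icc a b)) :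
    IntervalIntegrable
      (fun s => √(w (t s) * derivWithin x (Icc a b) s ^ 2 + derivWithin t (Icc a b) s ^ 2))
      MeasureTheory.volume a b := by
  refine ContinuousOn.intervalIntegrable ?_
  rw [uIcc_of_le hab.le]
  have hx' := hx.continuousOn_derivWithin (uniqueDiffOn_Icc hab) le_rfl
  have ht' := ht.continuousOn_derivWithin (uniqueDiffOn_Icc hab) le_rfl
  exact (((hw.comp_continuousOn ht.continuousOn).mul (hx'.pow 2)).add (ht'.pow 2)).sqrt

/-- For a C¹ path `η = (η₁,η₂)` in the `(x,t)`-plane, the hyperbolic length of `F ∘ η`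
equals `∫ √(cosh²(η₂)·η₁′² + η₂′²)`, and hence lies between `(1/√2)` times and all of the
ladder length `∫ √(cosh(2η₂)·η₁′² + η₂′²)`: the strip map is `√2`-bi-Lipschitz from the
ladder metric `cosh(2t)dx² + dt²` to the hyperbolic metric of the upper half plane. -/
theorem stripMap_length
    (η₁ η₂ : ℝ → ℝ)
    (h₁ : ContDiffOn ℝ 1 η₁ (Icc 0 1)) (h₂ : ContDiffOn ℝ 1 η₂ (Icc 0 1)) :
    (∫ s in (0 : ℝ)..1,
        ‖derivWithin (fun u => stripMap (η₁ u) (η₂ u)) (Icc 0 1) s‖ /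
          (stripMap (η₁ s) (η₂ s)).im) =
      (∫ s in (0 : ℝ)..1,
        Real.sqrt ((Real.cosh (η₂ s)) ^ 2 * (derivWithin η₁ (Icc 0 1) s) ^ 2 +
          (derivWithin η₂ (Icc 0 1) s) ^ 2)) ∧
    (1 / Real.sqrt 2) *
        (∫ s in (0 : ℝ)..1,
          Real.sqrt (Real.cosh (2 * η₂ s) * (derivWithin η₁ (Icc 0 1) s) ^ 2 +
            (derivWithin η₂ (Icc 0 1) s) ^ 2)) ≤
      (∫ s in (0 : ℝ)..1,
        ‖derivWithin (fun u => stripMap (η₁ u) (η₂ u)) (Icc 0 1) s‖ /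
          (stripMap (η₁ s) (η₂ s)).im) ∧
    (∫ s in (0 : ℝ)..1,
        ‖derivWithin (fun u => stripMap (η₁ u) (η₂ u)) (Icc 0 1) s‖ /
          (stripMap (η₁ s) (η₂ s)).im) ≤
      (∫ s in (0 : ℝ)..1,
        Real.sqrt (Real.cosh (2 * η₂ s) * (derivWithin η₁ (Icc 0 1) s) ^ 2 +
          (derivWithin η₂ (Icc 0 1) s) ^ 2)) := by
  have heq := integral_norm_derivWithin_stripMap_div_im one_pos
    (h₁.differentiableOn one_ne_zero) (h₂.differentiableOn one_ne_zero)
  have hhyp := intervalIntegrable_sqrt_mul_sq_derivWithin_add_sq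
    (w := fun t => cosh t ^ 2) (by fun_prop) one_pos h₁ h₂
  have hladder := intervalIntegrable_sqrt_mul_sq_derivWithin_add_sq
    (w := fun t => cosh (2 * t)) (by fun_prop) one_pos h₁ h₂
  refine ⟨heq, ?_, ?_⟩ <;> rw [heq]
  · rw [← intervalIntegral.integral_const_mul]
    exact intervalIntegral.integral_mono_on zero_le_one (hladder.const_mul _) hhyp
      fun s _ => inv_sqrt_two_mul_sqrt_cosh_two_mul_le _ _ _
  · exact intervalIntegral.integral_mono_on zero_le_one hhyp hladder
      fun s _ => sqrt_cosh_sq_le_sqrt_cosh_two_mul _ _ _
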